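/- arXiv:2403.16096 — 3 statements merged into one kernel-verified Lean document; each statement's English description precedes it below -/
import Mathlib

section
/- In a group G with elements a, b satisfying b * a * b⁻¹ = a^(p+1) and a^(p²) = 1 for a prime p, the element b^p commutes with a. -/
theorem bp_commutes {G : Type*} [Group G] (p : ℕ) (hp : p.Prime) (a b : G)
    (h1 : b * a * b⁻¹ = a ^ (p + 1)) (h2 : a ^ (p ^ 2) = 1) :
    b ^ p * a = a * b ^ p := by
  have key : ∀ k : ℕ, b ^ k * a * (b ^ k)⁻¹ = a ^ ((p + 1) ^ k) := by
    intro k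
    induction k with
    | zero => simp
    | succ k ih =>
      have e1 : b ^ (k + 1) * a * (b ^ (k + 1))⁻¹
          = b * (b ^ k * a * (b ^ k)⁻¹) * b⁻¹ := by group
      rw [e1, ih, ← conj_pow, h1, ← pow_mul, pow_succ, Nat.mul_comm]
  have hmod : ∀ n : ℕ, (p + 1) ^ n ≡ 1 + n * p [MOD p ^ 2] := by
    intro n
    induction n with
    | zero => simp [Nat.ModEq.refl]
    | succ n ih =>
      calc (p + 1) ^ (n + 1) = (p + 1) ^ n * (p + 1) := pow_succ _ _
        _ ≡ (1 + n * p) * (p + 1) [MOD p ^ 2] := ih.mul_right _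
        _ = 1 + (n + 1) * p + n * p ^ 2 := by ring
        _ ≡ 1 + (n + 1) * p + 0 [MOD p ^ 2] :=
            Nat.ModEq.add_left _ ((Nat.modEq_zero_iff_dvd).mpr ⟨n, by ring⟩)
        _ = 1 + (n + 1) * p := by ring
  have hm : (p + 1) ^ p ≡ 1 [MOD p ^ 2] := by
    calc (p + 1) ^ p ≡ 1 + p * p [MOD p ^ 2] := hmod p
      _ = 1 + 1 * p ^ 2 := by ring
      _ ≡ 1 + 0 [MOD p ^ 2] := Nat.ModEq.add_left _
          ((Nat.modEq_zero_iff_dvd).mpr ⟨1, by ring⟩)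
      _ = 1 := by ring
  have h1le : 1 ≤ (p + 1) ^ p := Nat.one_le_pow _ _ (by omega)
  have hdvd : p ^ 2 ∣ (p + 1) ^ p - 1 := (Nat.modEq_iff_dvd' h1le).mp hm.symm
  obtain ⟨c, hc⟩ := hdvd
  have hexp : (p + 1) ^ p = 1 + p ^ 2 * c := by omega
  have ha : a ^ ((p + 1) ^ p) = a := by
    rw [hexp, pow_add, pow_mul, h2, one_pow, pow_one, mul_one]
  have := key p
  rw [ha] at this
  calc b ^ p * a = (b ^ p * a * (b ^ p)⁻¹) * b ^ p := by group
    _ = a * b ^ p := by rw [this]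
end

section
/- Let G be a group and a, s ∈ G satisfy s⁻¹ * a * s = a², s^p = 1, and a^k = 1, where p, k are natural numbers with gcd(k, 2^p − 1) = 1. Then a = 1. -/
theorem a_trivial {G : Type*} [Group G] (a s : G) (p k : ℕ)
    (h1 : s⁻¹ * a * s = a ^ 2) (h2 : s ^ p = 1) (h3 : a ^ k = 1)
    (hcop : Nat.gcd k (2 ^ p - 1) = 1) : a = 1 := by
  have key : ∀ n, (s ^ n)⁻¹ * a * s ^ n = a ^ 2 ^ n := by
    intro n
    induction n with
    | zero => simp
    | succ n ih =>
      have e : (s ^ (n+1))⁻¹ * a * s ^ (n+1) = s⁻¹ * ((s ^ n)⁻¹ * a * s ^ n) * s := by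
        rw [pow_succ]; group
      rw [e, ih]
      have : s⁻¹ * a ^ 2 ^ n * s = (s⁻¹ * a * s) ^ 2 ^ n := by
        simpa [inv_inv] using (conj_pow (i := 2 ^ n) (a := s⁻¹) (b := a)).symm
      rw [this, h1, ← pow_mul, ← pow_succ']
  have hp := key p
  rw [h2] at hp
  simp at hp
  -- hp : a = a ^ 2 ^ p
  have h4 : a ^ (2 ^ p - 1) = 1 := by
    have h2p : 2 ^ p - 1 + 1 = 2 ^ p := Nat.succ_pred_eq_of_pos (Nat.pow_pos (by norm_num))
    have : a ^ (2 ^ p - 1) * a = a := by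
      rw [← pow_succ, h2p, ← hp]
    exact mul_right_cancel (by rw [this, one_mul])
  have d1 : orderOf a ∣ k := orderOf_dvd_of_pow_eq_one h3
  have d2 : orderOf a ∣ 2 ^ p - 1 := orderOf_dvd_of_pow_eq_one h4
  have : orderOf a ∣ 1 := hcop ▸ Nat.dvd_gcd d1 d2
  have := Nat.eq_one_of_dvd_one this
  exact orderOf_eq_one_iff.mp (Nat.dvd_one.mp ‹orderOf a ∣ 1›)
end

section
/- In the free group on {x, y}, the word x^n y^n x^{−n} y^{−n} can be written as a product of exactly n² conjugates of the commutator c = x y x⁻¹ y⁻¹ or its inverse; in particular there exists a list of n² elements gᵢ and signs εᵢ ∈ {1, −1} with x^n y^n x^{−n} y^{−n} = ∏ gᵢ c^{εᵢ} gᵢ⁻¹. -/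
section Aux

variable {G : Type*} [Group G]

/-- List whose conjugate-product gives `[a^n, b]`. -/
def wA (a : G) (n : ℕ) : List (G × ℤ) :=
  (List.range n).reverse.map (fun i => (a ^ i, (1 : ℤ)))

/-- List whose conjugate-product gives `[a^n, b^k]`. -/
def wB (a b : G) (n : ℕ) : ℕ → List (G × ℤ)
  | 0 => []
  | k + 1 => wA a n ++ (wB a b n k).map (fun p => (b * p.1, p.2))

lemma wA_length (a : G) (n : ℕ) : (wA a n).length = n := by
  simp [wA]

lemma wB_length (a b : G) (n k : ℕ) : (wB a b n k).length = n * k := by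
  induction k with
  | zero => simp [wB]
  | succ k ih => simp [wB, wA_length, ih]; ring

lemma wA_snd (a : G) (n : ℕ) : ∀ p ∈ wA a n, p.2 = 1 ∨ p.2 = -1 := by
  intro p hp
  simp [wA] at hp
  obtain ⟨i, -, rfl⟩ := hp
  left; rfl

lemma wB_snd (a b : G) (n k : ℕ) : ∀ p ∈ wB a b n k, p.2 = 1 ∨ p.2 = -1 := by
  induction k with
  | zero => simp [wB]
  | succ k ih =>
    intro p hp
    simp only [wB, List.mem_append, List.mem_map] at hp
    rcases hp with hp | ⟨q, hq, rfl⟩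
    · exact wA_snd a n p hp
    · exact ih q hq

lemma conj_map_prod (g c : G) (L : List (G × ℤ)) :
    ((L.map (fun p => (g * p.1, p.2))).map (fun p => p.1 * c ^ p.2 * p.1⁻¹)).prod
      = g * (L.map (fun p => p.1 * c ^ p.2 * p.1⁻¹)).prod * g⁻¹ := by
  induction L with
  | nil => simp
  | cons q L ih => simp only [List.map_map] at ih ⊢; simp [ih]; group

lemma wA_prod (a b : G) (n : ℕ) :
    ((wA a n).map (fun p => p.1 * (a * b * a⁻¹ * b⁻¹) ^ p.2 * p.1⁻¹)).prod
      = a ^ n * b * (a ^ n)⁻¹ * b⁻¹ := by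
  induction n with
  | zero => simp [wA]
  | succ n ih =>
    have : wA a (n + 1) = (a ^ n, (1 : ℤ)) :: wA a n := by
      simp [wA, List.range_succ]
    rw [this, List.map_cons, List.prod_cons, ih, pow_succ]
    group

lemma wB_prod (a b : G) (n k : ℕ) :
    ((wB a b n k).map (fun p => p.1 * (a * b * a⁻¹ * b⁻¹) ^ p.2 * p.1⁻¹)).prod
      = a ^ n * b ^ k * (a ^ n)⁻¹ * (b ^ k)⁻¹ := by
  induction k with
  | zero => simp [wB]
  | succ k ih =>
    rw [wB, List.map_append, List.prod_append, wA_prod, conj_map_prod, ih, pow_succ]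
    group

end Aux

theorem comm_word_area (n : ℕ) :
    let x : FreeGroup (Fin 2) := FreeGroup.of 0
    let y : FreeGroup (Fin 2) := FreeGroup.of 1
    let c : FreeGroup (Fin 2) := x * y * x⁻¹ * y⁻¹
    ∃ L : List (FreeGroup (Fin 2) × ℤ),
      (∀ p ∈ L, p.2 = 1 ∨ p.2 = -1) ∧ L.length = n ^ 2 ∧
      (L.map (fun p => p.1 * c ^ p.2 * p.1⁻¹)).prod = x ^ n * y ^ n * x⁻¹ ^ n * y⁻¹ ^ n := by
  intro x y c
  refine ⟨wB x y n n, wB_snd x y n n, ?_, ?_⟩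
  · rw [wB_length]; ring
  · rw [wB_prod x y n n, inv_pow, inv_pow]
end
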